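/- Let p be a prime, R = 𝔽_p[x₁,…,xₙ], and f ∈ R nonzero. If a real number c > 0 is an F-jumping number of f, then p·c is also an F-jumping number of f. Moreover, the set of F-jumping numbers of f has no accumulation point in ℝ, and every F-jumping number of f is a rational number. -/

import Mathlib

/-- The Frobenius power `J^{[q]}`: the ideal generated by `q`-th powers of elements of `J`. -/
def frobeniusPower {R : Type*} [CommRing R] (J : Ideal R) (q : ℕ) : Ideal R :=
  Ideal.span ((fun g => g ^ q) '' (J : Set R))

/-- An additive map `ψ : R → R` is `e`-Frobenius-linear if `ψ(r^{pᵉ}·s) = r·ψ(s)`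
for all `r, s`. -/
def IsFrobeniusLinear (p n e : ℕ)
    (ψ : MvPolynomial (Fin n) (ZMod p) → MvPolynomial (Fin n) (ZMod p)) : Prop :=
  (∀ x y, ψ (x + y) = ψ x + ψ y) ∧ ∀ r s, ψ (r ^ p ^ e * s) = r * ψ s

/-- The test ideal `τ(f^{a/pᵉ})`: the ideal generated by the images `ψ(f^a)` over all
`e`-Frobenius-linear maps `ψ`. -/
noncomputable def testIdeal (p n : ℕ) (f : MvPolynomial (Fin n) (ZMod p)) (a e : ℕ) :
    Ideal (MvPolynomial (Fin n) (ZMod p)) :=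
  Ideal.span {y | ∃ ψ, IsFrobeniusLinear p n e ψ ∧ ψ (f ^ a) = y}

/-- The test ideal `τ(f^c)` for an arbitrary real exponent `c`:
`τ(f^c) = ⋃ₑ τ(f^{⌈c·pᵉ⌉/pᵉ})` (the supremum of this increasing family of ideals);
for `c ≤ 0` this is the unit ideal `R`. -/
noncomputable def testIdealReal (p n : ℕ) (f : MvPolynomial (Fin n) (ZMod p)) (c : ℝ) :
    Ideal (MvPolynomial (Fin n) (ZMod p)) :=
  ⨆ e : ℕ, testIdeal p n f ⌈c * (p : ℝ) ^ e⌉₊ e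

/-- `c > 0` is an F-jumping number of `f` if `τ(f^{c-ε}) ≠ τ(f^c)` for every
`ε` with `0 < ε ≤ c`. -/
def IsFJumpingNumber (p n : ℕ) (f : MvPolynomial (Fin n) (ZMod p)) (c : ℝ) : Prop :=
  0 < c ∧ ∀ ε : ℝ, 0 < ε → ε ≤ c →
    testIdealReal p n f (c - ε) ≠ testIdealReal p n f c

/-!
Over `𝔽_p`, for `0 ≤ αᵢ < q = pᵉ` the map `rootComponent q α : ∑ gₘ xᵐ ↦ ∑ g_{q•u+α} xᵘ` is
`e`-Frobenius-linear and `g = ∑_α (rootComponent q α g)^q xᵅ`. Hence `τ(f^{a/q})` is generated by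
the `rootComponent q α (f^a)`, which have degree at most `a·deg f / q`. The ideals
`τ(f^{⌈c pᵉ⌉/pᵉ})` increase with `e`, so they stabilise at `τ(f^c)`; for `c ≤ M` this ideal is
therefore generated in degree `≤ ⌈M⌉·deg f`, only finitely many ideals occur, and since distinct
jumping numbers have distinct test ideals there are finitely many jumping numbers in `(0, M]`.

Because `τ(f^c)` is the `p`-th root ideal of `τ(f^{pc})` and `τ(f^{c+1}) = f·τ(f^c)`, jumping
numbers are stable under `c ↦ pc` and, above `1`, under `c ↦ c - 1`. So all
`pʲc - ⌈pʲc⌉ + 1 ∈ (0, 1]` are jumping numbers; two of them agree, which makes `(pᵏ - pʲ)c` an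
integer.
-/

open MvPolynomial Filter Topology

namespace Finsupp

variable {σ : Type*} {q : ℕ} {α β u v w : σ →₀ ℕ}

lemma smul_add_injective (q : ℕ) [NeZero q] (α : σ →₀ ℕ) :
    Function.Injective fun u : σ →₀ ℕ => q • u + α :=
  (add_left_injective α).comp (smul_right_injective _ (NeZero.ne q))

lemma smul_le_smul_add_iff (hα : ∀ i, α i < q) : q • w ≤ q • u + α ↔ w ≤ u := by
  simp only [le_def, add_apply, smul_apply, smul_eq_mul]
  refine forall_congr' fun i => ⟨fun h => Nat.le_of_lt_succ ?_, fun h => ?_⟩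
  · exact Nat.lt_of_mul_lt_mul_left (a := q) (by rw [Nat.mul_succ]; linarith [hα i])
  · nlinarith

lemma smul_add_tsub_smul (h : w ≤ u) : q • u + α - q • w = q • (u - w) + α := by
  ext i
  have := Nat.mul_le_mul_left q (le_def.1 h i)
  simp only [tsub_apply, add_apply, smul_apply, smul_eq_mul, Nat.mul_sub]
  omega

lemma smul_add_eq_smul_add_iff (hα : ∀ i, α i < q) (hβ : ∀ i, β i < q) :
    q • u + α = q • v + β ↔ u = v ∧ α = β := by
  refine ⟨fun h => ?_, by rintro ⟨rfl, rfl⟩; rfl⟩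
  simp only [Finsupp.ext_iff, add_apply, smul_apply, smul_eq_mul] at h ⊢
  rw [← forall_and]
  intro i
  have hq : 0 < q := (Nat.zero_le _).trans_lt (hα i)
  have hu := (Nat.div_mod_unique hq).2 ⟨add_comm (α i) (q * u i), hα i⟩
  have hv := (Nat.div_mod_unique hq).2 ⟨add_comm (β i) (q * v i), hβ i⟩
  rw [h i] at hu
  omega

lemma exists_eq_smul_add (hq : q ≠ 0) (m : σ →₀ ℕ) : ∃ u α, (∀ i, α i < q) ∧ m = q • u + α :=
  ⟨m.mapRange (· / q) (Nat.zero_div q), m.mapRange (· % q) (Nat.zero_mod q),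
    fun _ => Nat.mod_lt _ (Nat.pos_of_ne_zero hq), by ext i; simp [Nat.div_add_mod]⟩

end Finsupp

namespace MvPolynomial

open Finsupp

variable {σ R : Type*} [CommSemiring R] {q : ℕ} {α β : σ →₀ ℕ}

variable (σ) in
open Classical in
noncomputable def residues [Finite σ] (q : ℕ) : Finset (σ →₀ ℕ) :=
  Finset.Iic (Finsupp.equivFunOnFinite.symm fun _ => q - 1)

lemma mem_residues [Finite σ] [NeZero q] : α ∈ residues σ q ↔ ∀ i, α i < q := by
  have := NeZero.pos q
  simp only [residues, Finset.mem_Iic, Finsupp.le_def, Finsupp.coe_equivFunOnFinite_symm]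
  exact forall_congr' fun i => by omega

noncomputable def rootComponent (q : ℕ) [NeZero q] (α : σ →₀ ℕ) :
    MvPolynomial σ R →ₗ[R] MvPolynomial σ R :=
  (AddMonoidAlgebra.coeffLinearEquiv R).symm.toLinearMap ∘ₗ
    Finsupp.lcomapDomain _ (smul_add_injective q α) ∘ₗ
    (AddMonoidAlgebra.coeffLinearEquiv R).toLinearMap

variable [NeZero q]

@[simp]
lemma coeff_rootComponent (g : MvPolynomial σ R) (u : σ →₀ ℕ) :
    coeff u (rootComponent q α g) = coeff (q • u + α) g :=
  rfl

lemma rootComponent_expand_mul (hα : ∀ i, α i < q) (r s : MvPolynomial σ R) :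
    rootComponent q α (expand q r * s) = r * rootComponent q α s := by
  induction r using MvPolynomial.induction_on' with
  | monomial w c =>
    ext u
    simp only [coeff_rootComponent, expand_monomial, coeff_monomial_mul',
      smul_le_smul_add_iff hα]
    split_ifs with h
    · rw [smul_add_tsub_smul h]
    · rfl
  | add r₁ r₂ h₁ h₂ => rw [map_add, add_mul, map_add, h₁, h₂, add_mul]

lemma rootComponent_monomial_smul_add (hα : ∀ i, α i < q) (u : σ →₀ ℕ) (c : R) :
    rootComponent q α (monomial (q • u + α) c) = monomial u c := by
  ext v
  classical
  simp only [coeff_rootComponent, coeff_monomial, smul_add_eq_smul_add_iff hα hα, and_true]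

lemma rootComponent_monomial_smul_add_of_ne (hα : ∀ i, α i < q) (hβ : ∀ i, β i < q) (h : β ≠ α)
    (u : σ →₀ ℕ) (c : R) : rootComponent q α (monomial (q • u + β) c) = 0 := by
  ext v
  classical
  simp [coeff_monomial, smul_add_eq_smul_add_iff hβ hα, h]

lemma rootComponent_expand (r : MvPolynomial σ R) : rootComponent q 0 (expand q r) = r := by
  have h0 : ∀ i, (0 : σ →₀ ℕ) i < q := fun _ => NeZero.pos q
  have h1 : rootComponent q (0 : σ →₀ ℕ) (1 : MvPolynomial σ R) = 1 := by
    simpa using rootComponent_monomial_smul_add (R := R) h0 0 1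
  simpa [h1] using rootComponent_expand_mul h0 r 1

lemma sum_expand_rootComponent_mul_monomial [Finite σ] (g : MvPolynomial σ R) :
    ∑ α ∈ residues σ q, expand q (rootComponent q α g) * monomial α 1 = g := by
  induction g using MvPolynomial.induction_on' with
  | monomial m c =>
    obtain ⟨u, β, hβ, rfl⟩ := exists_eq_smul_add (NeZero.ne q) m
    rw [Finset.sum_eq_single_of_mem β (mem_residues.2 hβ) fun α hα hne =>
      by rw [rootComponent_monomial_smul_add_of_ne (mem_residues.1 hα) hβ hne.symm, map_zero,
        zero_mul]]
    rw [rootComponent_monomial_smul_add hβ, expand_monomial, monomial_mul, mul_one]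
  | add g h hg hh => simp only [map_add, add_mul, Finset.sum_add_distrib, hg, hh]

lemma totalDegree_rootComponent_mul_le (g : MvPolynomial σ R) :
    (rootComponent q α g).totalDegree * q ≤ g.totalDegree := by
  refine (Nat.le_div_iff_mul_le (NeZero.pos q)).1 (Finset.sup_le fun u hu => ?_)
  rw [Nat.le_div_iff_mul_le (NeZero.pos q)]
  have hle : (q • u + α).sum (fun _ e => e) ≤ g.totalDegree :=
    le_totalDegree (mem_support_iff.2 (by simpa using mem_support_iff.1 hu))
  calc (u.sum fun _ e => e) * q = Finsupp.degree (q • u) := by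
        rw [map_nsmul, smul_eq_mul, mul_comm]; rfl
    _ ≤ Finsupp.degree (q • u + α) := by rw [map_add]; exact Nat.le_add_right _ _
    _ ≤ g.totalDegree := hle

end MvPolynomial

lemma MvPolynomial.expand_prime_pow_zmod {σ : Type*} {p : ℕ} [Fact p.Prime] (e : ℕ)
    (g : MvPolynomial σ (ZMod p)) : expand (p ^ e) g = g ^ p ^ e := by
  induction g using MvPolynomial.induction_on' with
  | monomial m c => rw [expand_monomial, monomial_pow, ZMod.pow_card_pow]
  | add g h hg hh => rw [map_add, hg, hh, add_pow_char_pow]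

namespace IsFrobeniusLinear

variable {p n e e' : ℕ} {ψ φ : MvPolynomial (Fin n) (ZMod p) → MvPolynomial (Fin n) (ZMod p)}

lemma map_zero (hψ : IsFrobeniusLinear p n e ψ) : ψ 0 = 0 :=
  (AddMonoidHom.mk' ψ hψ.1).map_zero

lemma map_sum (hψ : IsFrobeniusLinear p n e ψ) {ι : Type*} (s : Finset ι)
    (g : ι → MvPolynomial (Fin n) (ZMod p)) : ψ (∑ i ∈ s, g i) = ∑ i ∈ s, ψ (g i) :=
  _root_.map_sum (AddMonoidHom.mk' ψ hψ.1) g s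

lemma comp (hψ : IsFrobeniusLinear p n e ψ) (hφ : IsFrobeniusLinear p n e' φ) :
    IsFrobeniusLinear p n (e + e') (ψ ∘ φ) :=
  ⟨fun x y => by simp only [Function.comp, hφ.1, hψ.1],
    fun r s => by simp only [Function.comp, pow_add, pow_mul, hφ.2, hψ.2]⟩

lemma comp_mul_left (hψ : IsFrobeniusLinear p n e ψ) (h : MvPolynomial (Fin n) (ZMod p)) :
    IsFrobeniusLinear p n e (fun s => ψ (h * s)) :=
  ⟨fun x y => by simp only [mul_add, hψ.1],
    fun r s => by simp only [mul_left_comm h, hψ.2]⟩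

variable [Fact p.Prime]

lemma map_eq_sum_rootComponent (hψ : IsFrobeniusLinear p n e ψ) (k : ℕ)
    (g : MvPolynomial (Fin n) (ZMod p)) :
    ψ g = ∑ α ∈ residues (Fin n) (p ^ k),
      ψ (rootComponent (p ^ k) α g ^ p ^ k * monomial α 1) := by
  conv_lhs => rw [← sum_expand_rootComponent_mul_monomial (q := p ^ k) g]
  simp only [hψ.map_sum, expand_prime_pow_zmod]

end IsFrobeniusLinear

lemma isFrobeniusLinear_rootComponent {p n e : ℕ} [Fact p.Prime] {α : Fin n →₀ ℕ}
    (hα : ∀ i, α i < p ^ e) : IsFrobeniusLinear p n e (rootComponent (p ^ e) α) :=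
  ⟨map_add _, fun r s => by rw [← expand_prime_pow_zmod, rootComponent_expand_mul hα]⟩

/-- The ideal `J^{[1/p]}`. -/
noncomputable def rootIdeal {p n : ℕ} (J : Ideal (MvPolynomial (Fin n) (ZMod p))) :
    Ideal (MvPolynomial (Fin n) (ZMod p)) :=
  Ideal.span {y | ∃ ψ, IsFrobeniusLinear p n 1 ψ ∧ ∃ g ∈ J, ψ g = y}

section TestIdeal

variable {p n : ℕ} (f : MvPolynomial (Fin n) (ZMod p)) {a b e e' : ℕ}

lemma IsFrobeniusLinear.map_pow_mem_testIdeal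
    {ψ : MvPolynomial (Fin n) (ZMod p) → MvPolynomial (Fin n) (ZMod p)}
    (hψ : IsFrobeniusLinear p n e ψ) : ψ (f ^ a) ∈ testIdeal p n f a e :=
  Ideal.subset_span ⟨ψ, hψ, rfl⟩

lemma IsFrobeniusLinear.map_mem_testIdeal
    {ψ : MvPolynomial (Fin n) (ZMod p) → MvPolynomial (Fin n) (ZMod p)}
    (hψ : IsFrobeniusLinear p n e' ψ) {g : MvPolynomial (Fin n) (ZMod p)}
    (hg : g ∈ testIdeal p n f a e) : ψ g ∈ testIdeal p n f a (e' + e) := by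
  induction hg using Submodule.span_induction generalizing ψ with
  | mem x hx =>
    obtain ⟨χ, hχ, rfl⟩ := hx
    exact (hψ.comp hχ).map_pow_mem_testIdeal f
  | zero => rw [hψ.map_zero]; exact Ideal.zero_mem _
  | add x y _ _ hx hy => rw [hψ.1]; exact Ideal.add_mem _ (hx hψ) (hy hψ)
  | smul r x _ hx => exact hx (hψ.comp_mul_left r)

lemma testIdeal_le_of_le (hab : a ≤ b) : testIdeal p n f b e ≤ testIdeal p n f a e := by
  refine Ideal.span_le.2 ?_
  rintro _ ⟨ψ, hψ, rfl⟩
  rw [← Nat.sub_add_cancel hab, pow_add]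
  exact (hψ.comp_mul_left _).map_pow_mem_testIdeal f

lemma testIdeal_add_prime_pow :
    testIdeal p n f (a + p ^ e) e =
      Submodule.map (LinearMap.mulLeft (MvPolynomial (Fin n) (ZMod p)) f)
        (testIdeal p n f a e) := by
  rw [testIdeal, testIdeal, ← Ideal.submodule_span_eq, ← Ideal.submodule_span_eq,
    Submodule.map_span]
  congr 1
  ext y
  simp only [pow_add, mul_comm (f ^ a), Set.mem_image, LinearMap.mulLeft_apply]
  constructor
  · rintro ⟨ψ, hψ, rfl⟩
    exact ⟨ψ (f ^ a), ⟨ψ, hψ, rfl⟩, (hψ.2 f (f ^ a)).symm⟩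
  · rintro ⟨_, ⟨ψ, hψ, rfl⟩, rfl⟩
    exact ⟨ψ, hψ, hψ.2 f (f ^ a)⟩

variable [Fact p.Prime]

lemma testIdeal_eq_span_rootComponent :
    testIdeal p n f a e =
      Ideal.span ((fun α => rootComponent (p ^ e) α (f ^ a)) '' residues (Fin n) (p ^ e)) := by
  refine le_antisymm (Ideal.span_le.2 ?_) (Ideal.span_le.2 ?_)
  · rintro _ ⟨ψ, hψ, rfl⟩
    rw [hψ.map_eq_sum_rootComponent e]
    refine Ideal.sum_mem _ fun α hα => ?_
    rw [hψ.2]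
    exact Ideal.mul_mem_right _ _ (Ideal.subset_span ⟨α, hα, rfl⟩)
  · rintro _ ⟨α, hα, rfl⟩
    exact (isFrobeniusLinear_rootComponent (mem_residues.1 hα)).map_pow_mem_testIdeal f

lemma testIdeal_le_mul_succ : testIdeal p n f a e ≤ testIdeal p n f (p * a) (e + 1) := by
  refine Ideal.span_le.2 ?_
  rintro _ ⟨ψ, hψ, rfl⟩
  have h0 : ∀ i, (0 : Fin n →₀ ℕ) i < p ^ 1 := fun _ => NeZero.pos _
  have hroot : rootComponent (p ^ 1) 0 (f ^ (p * a)) = f ^ a := by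
    conv_rhs => rw [← rootComponent_expand (q := p ^ 1) (f ^ a)]
    rw [expand_prime_pow_zmod]
    ring_nf
  rw [← hroot]
  exact (hψ.comp (isFrobeniusLinear_rootComponent h0)).map_pow_mem_testIdeal f

lemma testIdeal_succ : testIdeal p n f a (e + 1) = rootIdeal (testIdeal p n f a e) := by
  refine le_antisymm (Ideal.span_le.2 ?_) (Ideal.span_le.2 ?_)
  · rintro _ ⟨φ, hφ, rfl⟩
    rw [hφ.map_eq_sum_rootComponent e]
    refine Ideal.sum_mem _ fun α hα => Ideal.subset_span ⟨fun s => φ (s ^ p ^ e * monomial α 1),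
      ⟨fun x y => ?_, fun r s => ?_⟩, _,
      (isFrobeniusLinear_rootComponent (mem_residues.1 hα)).map_pow_mem_testIdeal f, rfl⟩
    · dsimp only
      rw [add_pow_char_pow, add_mul, hφ.1]
    · dsimp only
      rw [mul_pow, ← pow_mul, pow_one, ← pow_succ', mul_assoc, hφ.2]
  · rintro _ ⟨ψ, hψ, g, hg, rfl⟩
    rw [add_comm e]
    exact hψ.map_mem_testIdeal f hg

end TestIdeal

lemma Monotone.eventually_eq_iSup {α : Type*} [CompleteLattice α] [WellFoundedGT α] {a : ℕ → α}
    (ha : Monotone a) : ∀ᶠ e in atTop, a e = ⨆ e, a e := by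
  obtain ⟨N, hN⟩ := WellFoundedGT.monotone_chain_condition ⟨a, ha⟩
  refine eventually_atTop.2 ⟨N, fun m hm => le_antisymm (le_iSup a m) (iSup_le fun k => ?_)⟩
  rcases le_total k m with hk | hk
  · exact ha hk
  · exact ((hN k (hm.trans hk)).symm.trans (hN m hm)).le

lemma MvPolynomial.finite_setOf_totalDegree_le {σ R : Type*} [Finite σ] [CommRing R] [Finite R]
    (d : ℕ) : {g : MvPolynomial σ R | g.totalDegree ≤ d}.Finite := by
  have : Finite (restrictTotalDegree σ R d) := Module.finite_of_finite R
  exact (Set.toFinite (restrictTotalDegree σ R d : Set (MvPolynomial σ R))).subset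
    fun g hg => (mem_restrictTotalDegree σ d g).2 hg

section TestIdealReal

variable {p n : ℕ} (f : MvPolynomial (Fin n) (ZMod p))

lemma testIdealReal_add_one {c : ℝ} (hc : 0 ≤ c) :
    testIdealReal p n f (c + 1) =
      Submodule.map (LinearMap.mulLeft (MvPolynomial (Fin n) (ZMod p)) f)
        (testIdealReal p n f c) := by
  rw [testIdealReal, testIdealReal, Submodule.map_iSup]
  refine iSup_congr fun e => ?_
  have hceil : ⌈(c + 1) * (p : ℝ) ^ e⌉₊ = ⌈c * (p : ℝ) ^ e⌉₊ + p ^ e := by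
    rw [add_one_mul, ← Nat.cast_pow, Nat.ceil_add_natCast (by positivity)]
  rw [hceil, testIdeal_add_prime_pow]

variable [Fact p.Prime]

lemma monotone_testIdeal_ceil (c : ℝ) : Monotone fun e => testIdeal p n f ⌈c * (p : ℝ) ^ e⌉₊ e := by
  refine monotone_nat_of_le_succ fun e => (testIdeal_le_mul_succ f).trans (testIdeal_le_of_le f ?_)
  rw [Nat.ceil_le, Nat.cast_mul, pow_succ, ← mul_assoc, mul_comm (p : ℝ)]
  exact mul_le_mul_of_nonneg_right (Nat.le_ceil _) (Nat.cast_nonneg p)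

lemma eventually_testIdeal_ceil_eq (c : ℝ) :
    ∀ᶠ e in atTop, testIdeal p n f ⌈c * (p : ℝ) ^ e⌉₊ e = testIdealReal p n f c :=
  (monotone_testIdeal_ceil f c).eventually_eq_iSup

lemma testIdealReal_eq_rootIdeal (c : ℝ) :
    testIdealReal p n f c = rootIdeal (testIdealReal p n f (p * c)) := by
  obtain ⟨e, hc, hpc⟩ := (((tendsto_add_atTop_nat 1).eventually
    (eventually_testIdeal_ceil_eq f c)).and (eventually_testIdeal_ceil_eq f (p * c))).exists
  rw [← hc, ← hpc, testIdeal_succ, pow_succ', mul_comm (p : ℝ) c, mul_assoc]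

lemma testIdeal_eq_span_totalDegree_le {a e d : ℕ} (h : a ≤ d * p ^ e) :
    testIdeal p n f a e =
      Ideal.span {g | g ∈ testIdeal p n f a e ∧ g.totalDegree ≤ d * f.totalDegree} := by
  refine le_antisymm ?_ (Ideal.span_le.2 fun g hg => hg.1)
  conv_lhs => rw [testIdeal_eq_span_rootComponent]
  refine Ideal.span_mono ?_
  rintro _ ⟨α, hα, rfl⟩
  refine ⟨(isFrobeniusLinear_rootComponent (mem_residues.1 hα)).map_pow_mem_testIdeal f,
    Nat.le_of_mul_le_mul_right ?_ (NeZero.pos (p ^ e))⟩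
  calc (rootComponent (p ^ e) α (f ^ a)).totalDegree * p ^ e ≤ (f ^ a).totalDegree :=
        totalDegree_rootComponent_mul_le _
    _ ≤ a * f.totalDegree := totalDegree_pow f a
    _ ≤ d * p ^ e * f.totalDegree := Nat.mul_le_mul_right _ h
    _ = d * f.totalDegree * p ^ e := by ring

lemma testIdealReal_eq_span_totalDegree_le {c M : ℝ} (hcM : c ≤ M) :
    testIdealReal p n f c =
      Ideal.span {g | g ∈ testIdealReal p n f c ∧ g.totalDegree ≤ ⌈M⌉₊ * f.totalDegree} := by
  obtain ⟨e, he⟩ := (eventually_testIdeal_ceil_eq f c).exists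
  rw [← he]
  refine testIdeal_eq_span_totalDegree_le f (Nat.ceil_le.2 ?_)
  push_cast
  exact mul_le_mul_of_nonneg_right (hcM.trans (Nat.le_ceil M)) (by positivity)

lemma finite_image_testIdealReal_Iic (M : ℝ) : (testIdealReal p n f '' Set.Iic M).Finite := by
  refine (((finite_setOf_totalDegree_le (⌈M⌉₊ * f.totalDegree)).finite_subsets).image
    Ideal.span).subset ?_
  rintro _ ⟨c, hc, rfl⟩
  exact ⟨_, fun g hg => hg.2, (testIdealReal_eq_span_totalDegree_le f hc).symm⟩

end TestIdealReal

namespace IsFJumpingNumber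

variable {p n : ℕ} {f : MvPolynomial (Fin n) (ZMod p)} {c c' : ℝ}

lemma testIdealReal_ne (h : IsFJumpingNumber p n f c) (hc' : 0 ≤ c') (hlt : c' < c) :
    testIdealReal p n f c' ≠ testIdealReal p n f c := by
  simpa using h.2 (c - c') (by linarith) (by linarith)

lemma sub_one (h : IsFJumpingNumber p n f c) (hc : 1 < c) : IsFJumpingNumber p n f (c - 1) := by
  refine ⟨by linarith, fun ε hε hεc heq => h.2 ε hε (by linarith) ?_⟩
  calc testIdealReal p n f (c - ε) = testIdealReal p n f (c - 1 - ε + 1) := by ring_nf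
    _ = testIdealReal p n f (c - 1 + 1) := by
      rw [testIdealReal_add_one f (by linarith), testIdealReal_add_one f (by linarith), heq]
    _ = testIdealReal p n f c := by ring_nf

lemma sub_natCast (h : IsFJumpingNumber p n f c) (m : ℕ) (hm : (m : ℝ) < c) :
    IsFJumpingNumber p n f (c - m) := by
  induction m with
  | zero => simpa using h
  | succ m ih =>
    push_cast at hm
    rw [Nat.cast_succ, ← sub_sub]
    exact (ih (by linarith)).sub_one (by linarith)

lemma sub_ceil_add_one (h : IsFJumpingNumber p n f c) :
    IsFJumpingNumber p n f (c - ⌈c⌉₊ + 1) := by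
  have h1 : 1 ≤ ⌈c⌉₊ := Nat.one_le_ceil_iff.2 h.1
  convert h.sub_natCast (⌈c⌉₊ - 1) ?_ using 1 <;> push_cast [Nat.cast_sub h1]
  · ring
  · linarith [Nat.ceil_lt_add_one h.1.le]

variable [Fact p.Prime]

lemma prime_mul (h : IsFJumpingNumber p n f c) : IsFJumpingNumber p n f (p * c) := by
  have hp : (0 : ℝ) < p := Nat.cast_pos.2 (Fact.out : p.Prime).pos
  refine ⟨mul_pos hp h.1, fun ε hε hεc heq => h.2 (ε / p) (div_pos hε hp)
    ((div_le_iff₀ hp).2 (by linarith)) ?_⟩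
  rw [testIdealReal_eq_rootIdeal, testIdealReal_eq_rootIdeal f c, mul_sub,
    mul_div_cancel₀ _ hp.ne', heq]

lemma prime_pow_mul (h : IsFJumpingNumber p n f c) (j : ℕ) :
    IsFJumpingNumber p n f (p ^ j * c) := by
  induction j with
  | zero => simpa using h
  | succ j ih => simpa only [pow_succ', mul_assoc] using ih.prime_mul

end IsFJumpingNumber

section Finiteness

variable {p n : ℕ} (f : MvPolynomial (Fin n) (ZMod p))

lemma injOn_testIdealReal : Set.InjOn (testIdealReal p n f) {c | IsFJumpingNumber p n f c} := by
  intro c hc c' hc' heq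
  by_contra hne
  rcases lt_or_gt_of_ne hne with hlt | hlt
  · exact hc'.testIdealReal_ne hc.1.le hlt heq
  · exact hc.testIdealReal_ne hc'.1.le hlt heq.symm

variable [Fact p.Prime]

lemma finite_setOf_isFJumpingNumber_le (M : ℝ) :
    {c | IsFJumpingNumber p n f c ∧ c ≤ M}.Finite :=
  Set.Finite.of_finite_image
    ((finite_image_testIdealReal_Iic f M).subset (Set.image_mono fun _ hc => hc.2))
    ((injOn_testIdealReal f).mono fun _ hc => hc.1)

lemma not_accPt_setOf_isFJumpingNumber (x : ℝ) :
    ¬AccPt x (𝓟 {c | IsFJumpingNumber p n f c}) := by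
  intro hx
  refine (finite_setOf_isFJumpingNumber_le f (x + 1)).not_infinite
    (Set.Infinite.of_accPt (x := x) ?_)
  rw [accPt_iff_frequently] at hx ⊢
  exact (hx.and_eventually (Iio_mem_nhds (lt_add_one x))).mono
    fun y ⟨⟨hne, hy⟩, hlt⟩ => ⟨hne, hy, le_of_lt hlt⟩

lemma IsFJumpingNumber.exists_rat {c : ℝ} (h : IsFJumpingNumber p n f c) : ∃ q : ℚ, c = q := by
  obtain ⟨j, k, hjk, hr⟩ := (finite_setOf_isFJumpingNumber_le f 1).exists_lt_map_eq_of_forall_mem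
    (f := fun j : ℕ => (p : ℝ) ^ j * c - ⌈(p : ℝ) ^ j * c⌉₊ + 1)
    fun j => (⟨(h.prime_pow_mul j).sub_ceil_add_one, by linarith [Nat.le_ceil ((p : ℝ) ^ j * c)]⟩ :
      IsFJumpingNumber p n f _ ∧ _ ≤ (1 : ℝ))
  have hpow : (p : ℝ) ^ j < p ^ k :=
    pow_lt_pow_right₀ (Nat.one_lt_cast.2 (Fact.out : p.Prime).one_lt) hjk
  refine ⟨(⌈(p : ℝ) ^ k * c⌉₊ - ⌈(p : ℝ) ^ j * c⌉₊ : ℚ) / (p ^ k - p ^ j), ?_⟩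
  push_cast
  rw [eq_div_iff (sub_ne_zero.2 hpow.ne')]
  linear_combination -hr

end Finiteness

theorem fJumpingNumbers_discrete_rational_general (p n : ℕ) (hp : p.Prime)
    (f : MvPolynomial (Fin n) (ZMod p)) :
    (∀ c : ℝ, IsFJumpingNumber p n f c → IsFJumpingNumber p n f ((p : ℝ) * c)) ∧
    (∀ x : ℝ, ¬ AccPt x (Filter.principal {c : ℝ | IsFJumpingNumber p n f c})) ∧
    (∀ c : ℝ, IsFJumpingNumber p n f c → ∃ q : ℚ, c = (q : ℝ)) := by
  have := Fact.mk hp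
  exact ⟨fun _ hc => hc.prime_mul, not_accPt_setOf_isFJumpingNumber f, fun _ hc => hc.exists_rat⟩

theorem fJumpingNumbers_discrete_rational (p n : ℕ) (hp : p.Prime)
    (f : MvPolynomial (Fin n) (ZMod p)) (hf : f ≠ 0) :
    (∀ c : ℝ, IsFJumpingNumber p n f c → IsFJumpingNumber p n f ((p : ℝ) * c)) ∧
    (∀ x : ℝ, ¬ AccPt x (Filter.principal {c : ℝ | IsFJumpingNumber p n f c})) ∧
    (∀ c : ℝ, IsFJumpingNumber p n f c → ∃ q : ℚ, c = (q : ℝ)) :=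
  fJumpingNumbers_discrete_rational_general p n hp f
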